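/- arXiv:1802.02291 — 9 statements merged into one kernel-verified Lean document; each statement's English description precedes it below -/
import Mathlib

section
/- A neighborhood frame F = (S, N) validates the formula Δp ↔ Δ¬p under the new neighborhood semantics (where M,s ⊨ Δφ iff the truth set of φ is in N(s)) if and only if F has property (c): for all s ∈ S and X ⊆ S, X ∈ N(s) implies S \ X ∈ N(s). -/
inductive CForm : Type where
  | atom : ℕ → CForm
  | neg : CForm → CForm
  | conj : CForm → CForm → CForm
  | delta : CForm → CForm

/-- p → q abbreviates ¬(p ∧ ¬q) -/
def CForm.impl (φ ψ : CForm) : CForm := .neg (.conj φ (.neg ψ))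
/-- p ∨ q abbreviates ¬(¬p ∧ ¬q) -/
def CForm.disj (φ ψ : CForm) : CForm := .neg (.conj (.neg φ) (.neg ψ))

structure NbhModel (S : Type) where
  N : S → Set (Set S)
  V : ℕ → Set S

/-- new neighborhood semantics -/
def newSat {S : Type} (M : NbhModel S) : S → CForm → Prop
  | s, .atom p => s ∈ M.V p
  | s, .neg φ => ¬ newSat M s φ
  | s, .conj φ ψ => newSat M s φ ∧ newSat M s ψ
  | s, .delta φ => {t | newSat M t φ} ∈ M.N s

/-- old neighborhood semantics -/
def oldSat {S : Type} (M : NbhModel S) : S → CForm → Prop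
  | s, .atom p => s ∈ M.V p
  | s, .neg φ => ¬ oldSat M s φ
  | s, .conj φ ψ => oldSat M s φ ∧ oldSat M s ψ
  | s, .delta φ => {t | oldSat M t φ} ∈ M.N s ∨ {t | oldSat M t φ}ᶜ ∈ M.N s

/-- property (c): closure under complements -/
def HasC {S : Type} (N : S → Set (Set S)) : Prop :=
  ∀ s X, X ∈ N s → Xᶜ ∈ N s

/-- a c-model -/
def IsCModel {S : Type} (M : NbhModel S) : Prop := HasC M.N

/-- the c-variation of a neighborhood model -/
def cVar {S : Type} (M : NbhModel S) : NbhModel S :=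
  ⟨fun s => {X | X ∈ M.N s ∨ Xᶜ ∈ M.N s}, M.V⟩

structure KModel (S : Type) where
  R : S → S → Prop
  V : ℕ → Set S

/-- Kripke semantics for contingency logic -/
def kSat {S : Type} (M : KModel S) : S → CForm → Prop
  | s, .atom p => s ∈ M.V p
  | s, .neg φ => ¬ kSat M s φ
  | s, .conj φ ψ => kSat M s φ ∧ kSat M s ψ
  | s, .delta φ => ∀ t u, M.R s t → M.R s u → (kSat M t φ ↔ kSat M u φ)

/-- the qf-variation of a Kripke model -/
def qfVar {S : Type} (M : KModel S) : NbhModel S :=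
  ⟨fun s => {X | {t | M.R s t} ⊆ X ∨ {t | M.R s t} ⊆ Xᶜ}, M.V⟩

/-- (U,U') is Z-coherent -/
def ZCoherent {S S' : Type} (Z : S → S' → Prop) (U : Set S) (U' : Set S') : Prop :=
  ∀ x y, Z x y → (x ∈ U ↔ y ∈ U')

/-- a c-bisimulation (also: qf-bisimulation, monotonic c-bisimulation): atoms agree
and Z-coherent pairs are matched in neighborhoods -/
def IsCBisim {S S' : Type} (M : NbhModel S) (M' : NbhModel S') (Z : S → S' → Prop) : Prop :=
  ∀ s s', Z s s' →
    ((∀ p, s ∈ M.V p ↔ s' ∈ M'.V p) ∧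
     ∀ U U', ZCoherent Z U U' → (U ∈ M.N s ↔ U' ∈ M'.N s'))

/-- an nbh-Δ-bisimulation -/
def IsNbhDeltaBisim {S S' : Type} (M : NbhModel S) (M' : NbhModel S') (Z : S → S' → Prop) : Prop :=
  ∀ s s', Z s s' →
    ((∀ p, s ∈ M.V p ↔ s' ∈ M'.V p) ∧
     ∀ U U', ZCoherent Z U U' →
       ((U ∈ M.N s ∨ Uᶜ ∈ M.N s) ↔ (U' ∈ M'.N s' ∨ U'ᶜ ∈ M'.N s')))

/-- property (s): closure under supersets (monotonicity) -/
def HasMono {S : Type} (N : S → Set (Set S)) : Prop :=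
  ∀ s X Y, X ∈ N s → X ⊆ Y → Y ∈ N s

/-- a c-monotonic bisimulation -/
def IsCMonBisim {S S' : Type} (M : NbhModel S) (M' : NbhModel S') (Z : S → S' → Prop) : Prop :=
  ∀ s s', Z s s' →
    ((∀ p, s ∈ M.V p ↔ s' ∈ M'.V p) ∧
     (∀ X, X ∈ M.N s → ∃ X' ∈ M'.N s', ∀ x' ∈ X', ∃ x ∈ X, Z x x') ∧
     (∀ X', X' ∈ M'.N s' → ∃ X ∈ M.N s, ∀ x ∈ X, ∃ x' ∈ X', Z x x'))

/-- quasi-filter: (n), (i), (c), (ws) -/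
def IsQuasiFilter {S : Type} (N : S → Set (Set S)) : Prop :=
  ∀ s, (Set.univ ∈ N s) ∧
    (∀ X Y, X ∈ N s → Y ∈ N s → X ∩ Y ∈ N s) ∧
    (∀ X, X ∈ N s → Xᶜ ∈ N s) ∧
    (∀ X, X ∈ N s → ∀ Y Z : Set S, X ∪ Y ∈ N s ∨ Xᶜ ∪ Z ∈ N s)

/-- a rel-Δ-bisimulation between Kripke models -/
def IsRelDeltaBisim {S S' : Type} (M : KModel S) (M' : KModel S') (Z : S → S' → Prop) : Prop :=
  ∀ s s', Z s s' →
    ((∀ p, s ∈ M.V p ↔ s' ∈ M'.V p) ∧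
     ∀ U U', ZCoherent Z U U' →
       (({t | M.R s t} ⊆ U ∨ {t | M.R s t} ⊆ Uᶜ) ↔
        ({t | M'.R s' t} ⊆ U' ∨ {t | M'.R s' t} ⊆ U'ᶜ)))

theorem newSat_delta_atom {S : Type} (M : NbhModel S) (s : S) (p : ℕ) :
    newSat M s (.delta (.atom p)) ↔ M.V p ∈ M.N s :=
  Iff.rfl

theorem newSat_delta_neg_atom {S : Type} (M : NbhModel S) (s : S) (p : ℕ) :
    newSat M s (.delta (.neg (.atom p))) ↔ (M.V p)ᶜ ∈ M.N s :=
  Iff.rfl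

theorem hasC_iff_mem_iff_compl_mem {S : Type} (N : S → Set (Set S)) :
    HasC N ↔ ∀ s X, X ∈ N s ↔ Xᶜ ∈ N s :=
  ⟨fun hc s X => ⟨hc s X, fun h => compl_compl X ▸ hc s Xᶜ h⟩,
    fun h s X => (h s X).mp⟩

theorem stmt0_general {S : Type} (N : S → Set (Set S)) :
    (∀ (V : ℕ → Set S) (s : S),
      newSat ⟨N, V⟩ s (.delta (.atom 0)) ↔ newSat ⟨N, V⟩ s (.delta (.neg (.atom 0)))) ↔
    HasC N := by
  simp only [newSat_delta_atom, newSat_delta_neg_atom, hasC_iff_mem_iff_compl_mem]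
  exact ⟨fun h s X => h (fun _ => X) s, fun h V s => h s (V 0)⟩

/-- a frame validates Δp ↔ Δ¬p under the new semantics iff it has property (c). -/
theorem stmt0 {S : Type} [Nonempty S] (N : S → Set (Set S)) :
    (∀ (V : ℕ → Set S) (s : S),
      newSat ⟨N, V⟩ s (.delta (.atom 0)) ↔ newSat ⟨N, V⟩ s (.delta (.neg (.atom 0)))) ↔
    HasC N :=
  stmt0_general N
end

section
/- Let M = (S, N, V) be a c-model (i.e., for all s, X ∈ N(s) implies S\X ∈ N(s)). Then for every formula φ of the contingency language and every s ∈ S, M,s satisfies φ under the new semantics (Δφ true iff φ^M ∈ N(s)) if and only if M,s satisfies φ under the old semantics (Δφ true iff φ^M ∈ N(s) or (¬φ)^M ∈ N(s)). -/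
/-! The old semantics of `M` is the new semantics of its c-variation, and on a c-model the
c-variation changes no neighbourhood. -/

theorem newSat_cVar_iff_oldSat {S : Type} (M : NbhModel S) (φ : CForm) (s : S) :
    newSat (cVar M) s φ ↔ oldSat M s φ := by
  induction φ generalizing s with
  | atom p => rfl
  | neg φ ih => exact not_congr (ih s)
  | conj φ ψ ihφ ihψ => exact and_congr (ihφ s) (ihψ s)
  | delta φ ih =>
    have htruth : {t | newSat (cVar M) t φ} = {t | oldSat M t φ} := Set.ext ih
    simp only [newSat, oldSat, htruth]
    rfl

theorem HasC.mem_or_compl_mem_iff {S : Type} {N : S → Set (Set S)} (hc : HasC N) (s : S)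
    (X : Set S) : X ∈ N s ∨ Xᶜ ∈ N s ↔ X ∈ N s :=
  ⟨fun h => h.elim id fun hXc => compl_compl X ▸ hc s _ hXc, Or.inl⟩

theorem IsCModel.cVar_eq {S : Type} {M : NbhModel S} (hc : IsCModel M) : cVar M = M := by
  obtain ⟨N, V⟩ := M
  simp only [cVar, NbhModel.mk.injEq, and_true]
  funext s
  exact Set.ext (hc.mem_or_compl_mem_iff s)

/-- on c-models the new and old semantics coincide. -/
theorem stmt1 {S : Type} (M : NbhModel S) (hc : IsCModel M) :
    ∀ (φ : CForm) (s : S), newSat M s φ ↔ oldSat M s φ := by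
  intro φ s
  rw [← newSat_cVar_iff_oldSat, hc.cVar_eq]
end

section
/- For any neighborhood model M = (S, N, V), define its c-variation c(M) = (S, cN, V) where cN(s) = {X ⊆ S : X ∈ N(s) or S\X ∈ N(s)}. Then c(M) is a c-model, and for every contingency formula φ and state s, M,s satisfies φ under the old semantics if and only if c(M),s satisfies φ under the new semantics. -/
theorem mem_cVar_N {S : Type} {M : NbhModel S} {s : S} {X : Set S} :
    X ∈ (cVar M).N s ↔ X ∈ M.N s ∨ Xᶜ ∈ M.N s :=
  Iff.rfl

theorem cVar_isCModel {S : Type} (M : NbhModel S) : IsCModel (cVar M) := fun _ _ hX => by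
  rw [mem_cVar_N, compl_compl]
  exact (mem_cVar_N.1 hX).symm

theorem oldSat_iff_newSat_cVar {S : Type} (M : NbhModel S) :
    ∀ (φ : CForm) (s : S), oldSat M s φ ↔ newSat (cVar M) s φ
  | .atom _, _ => Iff.rfl
  | .neg φ, s => not_congr (oldSat_iff_newSat_cVar M φ s)
  | .conj φ ψ, s =>
    and_congr (oldSat_iff_newSat_cVar M φ s) (oldSat_iff_newSat_cVar M ψ s)
  | .delta φ, s => by
    have truthSet_eq : {t | oldSat M t φ} = {t | newSat (cVar M) t φ} :=
      Set.ext fun t => oldSat_iff_newSat_cVar M φ t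
    rw [oldSat, newSat, mem_cVar_N, truthSet_eq]

/-- the c-variation is a c-model and is pointwise equivalent
(old semantics on M vs new semantics on c(M)). -/
theorem stmt2 {S : Type} (M : NbhModel S) :
    IsCModel (cVar M) ∧
    ∀ (φ : CForm) (s : S), oldSat M s φ ↔ newSat (cVar M) s φ :=
  ⟨cVar_isCModel M, oldSat_iff_newSat_cVar M⟩
end

section
/- Contingency formulas are invariant under c-bisimilarity: if M and M' are c-models and Z is a c-bisimulation between them with (s,s') ∈ Z, then for all contingency formulas φ, M,s ⊨ φ iff M',s' ⊨ φ (under the new semantics). -/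
theorem IsCBisim.zCoherent_newSat {S S' : Type} {M : NbhModel S} {M' : NbhModel S'}
    {Z : S → S' → Prop} (hZ : IsCBisim M M' Z) (φ : CForm) :
    ZCoherent Z {t | newSat M t φ} {t' | newSat M' t' φ} := by
  induction φ with
  | atom p => exact fun x y hxy => (hZ x y hxy).1 p
  | neg φ ih => exact fun x y hxy => not_congr (ih x y hxy)
  | conj φ ψ ihφ ihψ => exact fun x y hxy => and_congr (ihφ x y hxy) (ihψ x y hxy)
  | delta φ ih => exact fun x y hxy => (hZ x y hxy).2 _ _ ih

theorem stmt5_general {S S' : Type} (M : NbhModel S) (M' : NbhModel S')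
    (Z : S → S' → Prop) (hZ : IsCBisim M M' Z) (s : S) (s' : S') (hss' : Z s s') :
    ∀ φ : CForm, newSat M s φ ↔ newSat M' s' φ :=
  fun φ => hZ.zCoherent_newSat φ s s' hss'

/-- invariance of contingency formulas under c-bisimilarity. -/
theorem stmt5 {S S' : Type} (M : NbhModel S) (M' : NbhModel S')
    (hM : IsCModel M) (hM' : IsCModel M')
    (Z : S → S' → Prop) (hZ : IsCBisim M M' Z) (s : S) (s' : S') (hss' : Z s s') :
    ∀ φ : CForm, newSat M s φ ↔ newSat M' s' φ :=
  stmt5_general M M' Z hZ s s' hss'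
end

section
/- Between monotonic c-models, every c-monotonic bisimulation is a monotonic c-bisimulation. -/
theorem ZCoherent.subset_right_of_forall_exists {S S' : Type} {Z : S → S' → Prop}
    {U : Set S} {U' : Set S'} (hcoh : ZCoherent Z U U') {X' : Set S'}
    (hX' : ∀ x' ∈ X', ∃ x ∈ U, Z x x') : X' ⊆ U' := fun x' hx' => by
  obtain ⟨x, hxU, hxx'⟩ := hX' x' hx'
  exact (hcoh x x' hxx').mp hxU

theorem ZCoherent.subset_left_of_forall_exists {S S' : Type} {Z : S → S' → Prop}
    {U : Set S} {U' : Set S'} (hcoh : ZCoherent Z U U') {X : Set S}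
    (hX : ∀ x ∈ X, ∃ x' ∈ U', Z x x') : X ⊆ U := fun x hx => by
  obtain ⟨x', hx'U', hxx'⟩ := hX x hx
  exact (hcoh x x' hxx').mpr hx'U'

theorem stmt8_general {S S' : Type} (M : NbhModel S) (M' : NbhModel S')
    (hMs : HasMono M.N) (hM's : HasMono M'.N)
    (Z : S → S' → Prop)
    (hZ : IsCMonBisim M M' Z) :
    IsCBisim M M' Z := by
  intro s s' hss'
  obtain ⟨hatoms, hzig, hzag⟩ := hZ s s' hss'
  refine ⟨hatoms, fun U U' hcoh => ⟨fun hU => ?_, fun hU' => ?_⟩⟩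
  · obtain ⟨X', hX', hX'U⟩ := hzig U hU
    exact hM's s' X' U' hX' (hcoh.subset_right_of_forall_exists hX'U)
  · obtain ⟨X, hX, hXU'⟩ := hzag U' hU'
    exact hMs s X U hX (hcoh.subset_left_of_forall_exists hXU')

/-- between monotonic c-models, every c-monotonic bisimulation is a
monotonic c-bisimulation. -/
theorem stmt8 {S S' : Type} (M : NbhModel S) (M' : NbhModel S')
    (hMs : HasMono M.N) (hMc : HasC M.N) (hM's : HasMono M'.N) (hM'c : HasC M'.N)
    (Z : S → S' → Prop) (hne : ∃ s s', Z s s')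
    (hZ : IsCMonBisim M M' Z) :
    IsCBisim M M' Z :=
  stmt8_general M M' hMs hM's Z hZ
end

section
/- For every Kripke model M and its qf-variation qf(M), and for every contingency formula φ and state s: M,s ⊨ φ under Kripke semantics iff qf(M),s ⊨ φ under the new neighborhood semantics. Hence every Kripke model has a pointwise equivalent quasi-filter model. -/
section HomogeneousSets

variable {S : Type*} {A X Y : Set S}

theorem subset_or_subset_compl_iff :
    A ⊆ X ∨ A ⊆ Xᶜ ↔ ∀ t u, t ∈ A → u ∈ A → (t ∈ X ↔ u ∈ X) := by
  constructor
  · rintro (h | h) t u ht hu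
    · exact iff_of_true (h ht) (h hu)
    · exact iff_of_false (h ht) (h hu)
  · intro h
    by_cases hX : ∃ t ∈ A, t ∈ X
    · obtain ⟨t, ht, htX⟩ := hX
      exact Or.inl fun u hu => (h t u ht hu).mp htX
    · exact Or.inr fun u hu huX => hX ⟨u, hu, huX⟩

theorem subset_or_subset_compl_inter (hX : A ⊆ X ∨ A ⊆ Xᶜ) (hY : A ⊆ Y ∨ A ⊆ Yᶜ) :
    A ⊆ X ∩ Y ∨ A ⊆ (X ∩ Y)ᶜ := by
  rw [Set.compl_inter]
  rcases hX with hX | hX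
  · rcases hY with hY | hY
    · exact Or.inl (Set.subset_inter hX hY)
    · exact Or.inr (hY.trans Set.subset_union_right)
  · exact Or.inr (hX.trans Set.subset_union_left)

theorem subset_or_subset_compl_compl (hX : A ⊆ X ∨ A ⊆ Xᶜ) : A ⊆ Xᶜ ∨ A ⊆ Xᶜᶜ := by
  rwa [compl_compl, or_comm]

end HomogeneousSets

theorem isQuasiFilter_qfVar {S : Type} (M : KModel S) : IsQuasiFilter (qfVar M).N := by
  intro s
  refine ⟨Or.inl (Set.subset_univ _), fun X Y => subset_or_subset_compl_inter,
    fun X => subset_or_subset_compl_compl, ?_⟩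
  rintro X (hX | hX) Y Z
  · exact Or.inl (Or.inl (hX.trans Set.subset_union_left))
  · exact Or.inr (Or.inl (hX.trans Set.subset_union_left))

theorem kSat_iff_newSat_qfVar {S : Type} (M : KModel S) (φ : CForm) (s : S) :
    kSat M s φ ↔ newSat (qfVar M) s φ := by
  induction φ generalizing s with
  | atom p => rfl
  | neg φ ih => exact not_congr (ih s)
  | conj φ ψ ihφ ihψ => exact and_congr (ihφ s) (ihψ s)
  | delta φ ih =>
    -- `X ∈ qf(M).N s` says `X` does not split `R(s)`, which is what `Δ` asks of the truth set.
    simp only [newSat, ← ih]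
    exact subset_or_subset_compl_iff.symm

/-- Kripke semantics on M coincides pointwise with the new
neighborhood semantics on qf(M); hence every Kripke model has a pointwise
equivalent quasi-filter model. -/
theorem stmt11 {S : Type} (M : KModel S) :
    (∀ (φ : CForm) (s : S), kSat M s φ ↔ newSat (qfVar M) s φ) ∧
    IsQuasiFilter (qfVar M).N :=
  ⟨kSat_iff_newSat_qfVar M, isQuasiFilter_qfVar M⟩
end

section
/- Under the new neighborhood semantics, the formula ∇p (= ¬Δp) defines the property (d) on the class of c-frames: a c-frame F validates ∇p if and only if for all s and X, X ∈ N(s) implies S\X ∉ N(s). -/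
theorem stmt15_general {S : Type} (N : S → Set (Set S)) (hc : HasC N) :
    (∀ (V : ℕ → Set S) (s : S), newSat ⟨N, V⟩ s (.neg (.delta (.atom 0)))) ↔
    (∀ s X, X ∈ N s → Xᶜ ∉ N s) := by
  constructor
  · intro hValid s X hX _
    exact hValid (fun _ => X) s hX
  · intro hD V s hΔ
    exact hD s _ hΔ (hc s _ hΔ)

/-- on c-frames, ∇p defines property (d). -/
theorem stmt15 {S : Type} [Nonempty S] (N : S → Set (Set S)) (hc : HasC N) :
    (∀ (V : ℕ → Set S) (s : S), newSat ⟨N, V⟩ s (.neg (.delta (.atom 0)))) ↔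
    (∀ s X, X ∈ N s → Xᶜ ∉ N s) :=
  stmt15_general N hc
end

section
/- Under the new neighborhood semantics, the formula p → Δ∇p defines property (b) on the class of c-frames: a c-frame F validates p → Δ∇p iff for all s ∈ S and X ⊆ S, s ∈ X implies {u ∈ S : S\X ∉ N(u)} ∈ N(s). -/
/-! Taking `V p := X` for every atom makes the truth set of `∇p` equal to `{u | X ∉ N u}`;
under (c) this is `{u | Xᶜ ∉ N u}`. -/

theorem newSat_impl {S : Type} (M : NbhModel S) (s : S) (φ ψ : CForm) :
    newSat M s (φ.impl ψ) ↔ (newSat M s φ → newSat M s ψ) := by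
  simp only [CForm.impl, newSat, not_and, not_not]

theorem HasC.compl_mem_iff {S : Type} {N : S → Set (Set S)} (hc : HasC N) (u : S) (X : Set S) :
    Xᶜ ∈ N u ↔ X ∈ N u :=
  ⟨fun h => compl_compl X ▸ hc u Xᶜ h, hc u X⟩

theorem valid_atom_imp_delta_nabla_iff {S : Type} (N : S → Set (Set S)) :
    (∀ (V : ℕ → Set S) (s : S),
      newSat ⟨N, V⟩ s (.impl (.atom 0) (.delta (.neg (.delta (.atom 0)))))) ↔
    (∀ (s : S) (X : Set S), s ∈ X → {u | X ∉ N u} ∈ N s) := by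
  simp only [newSat_impl]
  exact ⟨fun h s X => h (fun _ => X) s, fun h V s => h s (V 0)⟩

theorem stmt16_general {S : Type} (N : S → Set (Set S)) (hc : HasC N) :
    (∀ (V : ℕ → Set S) (s : S),
      newSat ⟨N, V⟩ s (.impl (.atom 0) (.delta (.neg (.delta (.atom 0)))))) ↔
    (∀ (s : S) (X : Set S), s ∈ X → {u | Xᶜ ∉ N u} ∈ N s) := by
  simp only [valid_atom_imp_delta_nabla_iff, hc.compl_mem_iff]

/-- on c-frames, p → Δ∇p defines property (b). -/
theorem stmt16 {S : Type} [Nonempty S] (N : S → Set (Set S)) (hc : HasC N) :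
    (∀ (V : ℕ → Set S) (s : S),
      newSat ⟨N, V⟩ s (.impl (.atom 0) (.delta (.neg (.delta (.atom 0)))))) ↔
    (∀ (s : S) (X : Set S), s ∈ X → {u | Xᶜ ∉ N u} ∈ N s) :=
  stmt16_general N hc
end

section
/- Under the new neighborhood semantics on c-frames, Δp → p defines property (t): a c-frame validates Δp → p iff for all s and X, X ∈ N(s) implies s ∈ X. Note that combined with closure under complements this forces N(s) = ∅ for every s. -/
def HasT {S : Type} (N : S → Set (Set S)) : Prop :=
  ∀ s X, X ∈ N s → s ∈ X

theorem validates_delta_impl_iff_hasT {S : Type} (N : S → Set (Set S)) (p : ℕ) :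
    (∀ (V : ℕ → Set S) (s : S), newSat ⟨N, V⟩ s ((CForm.delta (.atom p)).impl (.atom p))) ↔
      HasT N := by
  simp only [newSat_impl, newSat]
  -- Valuing `p` as `X` makes `Δp` true at `s` exactly when `X ∈ N s`.
  exact ⟨fun h s X hX => h (fun _ => X) s hX, fun h V s hs => h s _ hs⟩

theorem eq_empty_of_hasT_of_hasC {S : Type} {N : S → Set (Set S)} (ht : HasT N) (hc : HasC N)
    (s : S) : N s = ∅ :=
  Set.eq_empty_of_forall_notMem fun X hX => ht s Xᶜ (hc s X hX) (ht s X hX)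

theorem stmt19_general {S : Type} (N : S → Set (Set S)) (hc : HasC N) :
    ((∀ (V : ℕ → Set S) (s : S),
        newSat ⟨N, V⟩ s (.impl (.delta (.atom 0)) (.atom 0))) ↔
      (∀ (s : S) (X : Set S), X ∈ N s → s ∈ X)) ∧
    ((∀ (s : S) (X : Set S), X ∈ N s → s ∈ X) → ∀ s : S, N s = ∅) :=
  ⟨validates_delta_impl_iff_hasT N 0, fun ht => eq_empty_of_hasT_of_hasC ht hc⟩

/-- on c-frames, Δp → p defines property (t); moreover (c) together
with (t) forces every neighborhood set to be empty. -/
theorem stmt19 {S : Type} [Nonempty S] (N : S → Set (Set S)) (hc : HasC N) :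
    ((∀ (V : ℕ → Set S) (s : S),
        newSat ⟨N, V⟩ s (.impl (.delta (.atom 0)) (.atom 0))) ↔
      (∀ (s : S) (X : Set S), X ∈ N s → s ∈ X)) ∧
    ((∀ (s : S) (X : Set S), X ∈ N s → s ∈ X) → ∀ s : S, N s = ∅) :=
  stmt19_general N hc
end
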